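/- Let Γ be a connected regular graph with d+1 distinct adjacency eigenvalues and finite odd-girth at least 2d+1. Then Γ has diameter exactly d and odd-girth exactly 2d+1. -/

import Mathlib

/-!
The adjacency matrix `A` is symmetric, so its minimal polynomial divides `∏ (X - μ)` over its
`d + 1` distinct eigenvalues. If `u, v` are at distance `m`, then `(A ^ m) u v` counts geodesics
and is positive, while `(A ^ i) u v = 0` for `i < m`; so `A ^ m` is not a combination of lower
powers of `A`, which forces `m < d + 1`.

For the odd girth, cut a shortest odd cycle of length `g > 2 D + 1` after `D + 1` steps and join
the cut vertex back to the start by a geodesic of length `ℓ ≤ D`. This gives two closed walks of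
lengths `D + 1 + ℓ` and `g - (D + 1) + ℓ`, both shorter than `g` and of odd total length, so one
of them is odd; and every odd closed walk contains an odd cycle no longer than itself. Hence
`2 d + 1 ≤ g ≤ 2 D + 1 ≤ 2 d + 1`.
-/

open SimpleGraph Polynomial

namespace Matrix.IsHermitian

variable {𝕜 : Type*} [RCLike 𝕜] {n : Type*} [Fintype n] [DecidableEq n] {A : Matrix n n 𝕜}

theorem aeval_prod_X_sub_C_eq_zero (hA : A.IsHermitian) {s : Finset ℝ}
    (hs : spectrum ℝ A ⊆ s) : aeval A (∏ μ ∈ s, (X - C μ)) = 0 := by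
  have hroot (i : n) : aeval (hA.eigenvalues i : 𝕜) (∏ μ ∈ s, (X - C μ)) = 0 := by
    rw [← RCLike.algebraMap_eq_ofReal, aeval_algebraMap_apply, aeval_def, eval₂_finsetProd]
    simp [Finset.prod_eq_zero (hs (hA.eigenvalues_mem_spectrum_real i))]
  let conj := (AlgHomClass.toAlgHom
    (Unitary.conjStarAlgAut 𝕜 _ hA.eigenvectorUnitary)).restrictScalars ℝ
  have hA' : A = conj (diagonalAlgHom ℝ (RCLike.ofReal ∘ hA.eigenvalues)) := hA.spectral_theorem
  rw [hA', aeval_algHom_apply, aeval_algHom_apply, aeval_pi_apply]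
  simp [hroot]

theorem natDegree_minpoly_le_ncard_spectrum (hA : A.IsHermitian) :
    (minpoly ℝ A).natDegree ≤ (spectrum ℝ A).ncard := by
  have hfin := A.finite_real_spectrum
  calc (minpoly ℝ A).natDegree ≤ (∏ μ ∈ hfin.toFinset, (X - C μ)).natDegree :=
        natDegree_le_of_dvd (minpoly.dvd _ _ (hA.aeval_prod_X_sub_C_eq_zero (by simp)))
          (monic_prod_of_monic _ _ fun μ _ ↦ monic_X_sub_C μ).ne_zero
    _ = (spectrum ℝ A).ncard := by
        rw [natDegree_finsetProd_X_sub_C_eq_card, Set.ncard_eq_toFinset_card _ hfin]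

end Matrix.IsHermitian

namespace SimpleGraph

section AdjMatrix

variable {V : Type*} [Fintype V] [DecidableEq V] (G : SimpleGraph V) [DecidableRel G.Adj]

theorem adjMatrix_pow_apply_eq_zero_of_lt_dist {R : Type*} [Semiring R] {u v : V} {k : ℕ}
    (hk : k < G.dist u v) : (G.adjMatrix R ^ k) u v = 0 := by
  have : IsEmpty {p : G.Walk u v | p.length = k} :=
    ⟨fun ⟨p, hp⟩ ↦ (G.dist_le p).not_gt (hp ▸ hk)⟩
  rw [adjMatrix_pow_apply_eq_card_walk, Fintype.card_eq_zero, Nat.cast_zero]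

theorem adjMatrix_pow_dist_apply_ne_zero {R : Type*} [Semiring R] [CharZero R] {u v : V}
    (h : G.Reachable u v) : (G.adjMatrix R ^ G.dist u v) u v ≠ 0 := by
  obtain ⟨p, hp⟩ := h.exists_walk_length_eq_dist
  rw [adjMatrix_pow_apply_eq_card_walk, Nat.cast_ne_zero, ← Nat.pos_iff_ne_zero,
    Fintype.card_pos_iff]
  exact ⟨⟨p, hp⟩⟩

theorem aeval_adjMatrix_apply_eq_zero_of_natDegree_lt_dist {R : Type*} [CommSemiring R]
    {u v : V} {p : R[X]} (hp : p.natDegree < G.dist u v) : aeval (G.adjMatrix R) p u v = 0 := by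
  rw [aeval_eq_sum_range, Matrix.sum_apply]
  refine Finset.sum_eq_zero fun i hi ↦ ?_
  rw [Matrix.smul_apply, G.adjMatrix_pow_apply_eq_zero_of_lt_dist (by grind), smul_zero]

theorem diam_lt_natDegree_minpoly_adjMatrix {R : Type*} [Field R] [CharZero R]
    (hG : G.Connected) : G.diam < (minpoly R (G.adjMatrix R)).natDegree := by
  have := hG.nonempty
  obtain ⟨u, v, huv⟩ := G.exists_dist_eq_diam
  by_contra! hle
  apply G.adjMatrix_pow_dist_apply_ne_zero (R := R) (hG u v)
  have hrem : (X ^ G.dist u v %ₘ minpoly R (G.adjMatrix R)).natDegree < G.dist u v :=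
    (natDegree_modByMonic_lt _ (minpoly.monic (Algebra.IsIntegral.isIntegral _))
      (minpoly.ne_one _ _)).trans_le (huv ▸ hle)
  rw [← G.aeval_adjMatrix_apply_eq_zero_of_natDegree_lt_dist hrem,
    minpoly.aeval_modByMonic_minpoly, aeval_X_pow]

end AdjMatrix

variable {V : Type*} {G : SimpleGraph V}

namespace Walk

theorem exists_isCycle_odd_length_le {u : V} (w : G.Walk u u) (hw : Odd w.length) :
    ∃ (x : V) (c : G.Walk x x), c.IsCycle ∧ Odd c.length ∧ c.length ≤ w.length := by
  induction hn : w.length using Nat.strong_induction_on generalizing u with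
  | _ n ih =>
  cases w with
  | nil => simp at hw
  | cons hadj t =>
    by_cases ht : t.IsPath
    · have ht0 : t.length ≠ 0 := fun h ↦ hadj.ne (t.eq_of_length_eq_zero h).symm
      refine ⟨u, cons hadj t, isCycle_iff_isPath_tail_and_le_length.mpr ⟨by simpa, ?_⟩, hw,
        hn.le⟩
      rw [length_cons] at hw ⊢
      grind
    · obtain ⟨x, c, ⟨ru, rv, rfl⟩, hc⟩ :
          ∃ (x : V) (c : G.Walk x x), c.IsSubwalk t ∧ ¬c.Nil := by
        simpa [isPath_iff_isSubwalk_imp_nil] using ht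
      let r := cons hadj (ru.append rv)
      have hlen : c.length + r.length = n := by simp [r, ← hn]; omega
      have hc0 : 0 < c.length := not_nil_iff_lt_length.mp hc
      have hr0 : 0 < r.length := by simp [r]
      obtain ⟨y, c', hc'odd, hc'lt⟩ :
          ∃ (y : V) (c' : G.Walk y y), Odd c'.length ∧ c'.length < n := by
        rcases Nat.even_or_odd c.length with hce | hco
        · exact ⟨u, r, by grind, by omega⟩
        · exact ⟨x, c, hco, by omega⟩
      obtain ⟨x', c'', hcyc, hodd, hle⟩ := ih c'.length hc'lt c' hc'odd rfl
      exact ⟨x', c'', hcyc, hodd, by omega⟩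

theorem exists_odd_length_lt_of_two_mul_diam_add_one_lt (hG : G.ediam ≠ ⊤) {u : V}
    (w : G.Walk u u) (hw : Odd w.length) (hlong : 2 * G.diam + 1 < w.length) :
    ∃ (x : V) (c : G.Walk x x), Odd c.length ∧ c.length < w.length := by
  set D := G.diam
  obtain ⟨s, hs⟩ :=
    (preconnected_of_ediam_ne_top hG u (w.getVert (D + 1))).exists_walk_length_eq_dist
  have hsD : s.length ≤ D := hs ▸ G.dist_le_diam hG
  let c₁ := (w.take (D + 1)).append s.reverse
  let c₂ := s.append (w.drop (D + 1))
  have h₁ : c₁.length = D + 1 + s.length := by simp [c₁]; omega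
  have h₂ : c₂.length = s.length + (w.length - (D + 1)) := by simp [c₂]
  rcases Nat.even_or_odd c₁.length with he | ho
  · exact ⟨u, c₂, by grind, by omega⟩
  · exact ⟨u, c₁, ho, by omega⟩

end Walk

/-- The length of a shortest odd cycle; `0` (the value of `sInf ∅`) if there is none. -/
noncomputable def oddGirth (G : SimpleGraph V) : ℕ :=
  sInf {n : ℕ | Odd n ∧ ∃ (u : V) (w : G.Walk u u), w.IsCycle ∧ w.length = n}

theorem oddGirth_le_length {u : V} {w : G.Walk u u} (hc : w.IsCycle) (ho : Odd w.length) :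
    G.oddGirth ≤ w.length :=
  Nat.sInf_le ⟨ho, u, w, hc, rfl⟩

theorem exists_isCycle_length_eq_oddGirth
    (h : ∃ (u : V) (w : G.Walk u u), w.IsCycle ∧ Odd w.length) :
    ∃ (u : V) (w : G.Walk u u), w.IsCycle ∧ Odd w.length ∧ w.length = G.oddGirth := by
  obtain ⟨u, w, hc, ho⟩ := h
  obtain ⟨hodd, v, c, hcyc, hlen⟩ :
      G.oddGirth ∈
        {n : ℕ | Odd n ∧ ∃ (u : V) (w : G.Walk u u), w.IsCycle ∧ w.length = n} :=
    Nat.sInf_mem ⟨w.length, ho, u, w, hc, rfl⟩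
  exact ⟨v, c, hcyc, hlen ▸ hodd, hlen⟩

theorem oddGirth_le_two_mul_diam_add_one (hG : G.ediam ≠ ⊤) :
    G.oddGirth ≤ 2 * G.diam + 1 := by
  by_contra! hlt
  obtain ⟨u, w, hcyc, hodd, hlen⟩ := exists_isCycle_length_eq_oddGirth <| by
    obtain ⟨n, hn, u, w, hc, rfl⟩ := Nat.nonempty_of_pos_sInf (pos_of_gt hlt)
    exact ⟨u, w, hc, hn⟩
  obtain ⟨x, c, hcodd, hclt⟩ :=
    w.exists_odd_length_lt_of_two_mul_diam_add_one_lt hG hodd (by omega)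
  obtain ⟨y, c', hc'cyc, hc'odd, hc'le⟩ := c.exists_isCycle_odd_length_le hcodd
  have := oddGirth_le_length hc'cyc hc'odd
  omega

end SimpleGraph

theorem stmt_19_general {V : Type*} [Fintype V] [DecidableEq V] (G : SimpleGraph V)
    [DecidableRel G.Adj] (d : ℕ)
    (hconn : G.Connected)
    (heig : (spectrum ℝ (G.adjMatrix ℝ)).ncard = d + 1)
    (hoddcycle : ∃ (u : V) (w : G.Walk u u), w.IsCycle ∧ Odd w.length)
    (hog : ∀ (u : V) (w : G.Walk u u), w.IsCycle → Odd w.length → 2 * d + 1 ≤ w.length) :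
    G.diam = d ∧
      sInf {n : ℕ | Odd n ∧ ∃ (u : V) (w : G.Walk u u), w.IsCycle ∧ w.length = n}
        = 2 * d + 1 := by
  have hdiam : G.diam ≤ d := by
    have := G.diam_lt_natDegree_minpoly_adjMatrix (R := ℝ) hconn
    have := (G.isHermitian_adjMatrix ℝ).natDegree_minpoly_le_ncard_spectrum
    omega
  obtain ⟨u, w, hcyc, hodd, hlen⟩ := exists_isCycle_length_eq_oddGirth hoddcycle
  have hlower := hlen ▸ hog u w hcyc hodd
  have := hconn.nonempty
  have hupper := oddGirth_le_two_mul_diam_add_one (connected_iff_ediam_ne_top.mp hconn)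
  exact ⟨by omega, show G.oddGirth = 2 * d + 1 by omega⟩

/-- A connected regular graph with `d+1` distinct adjacency
eigenvalues and finite odd-girth at least `2d+1` has diameter exactly `d` and
odd-girth exactly `2d+1`. -/
theorem stmt_19 {V : Type*} [Fintype V] [DecidableEq V] (G : SimpleGraph V)
    [DecidableRel G.Adj] (k d : ℕ)
    (hconn : G.Connected) (hreg : G.IsRegularOfDegree k)
    (heig : (spectrum ℝ (G.adjMatrix ℝ)).ncard = d + 1)
    (hoddcycle : ∃ (u : V) (w : G.Walk u u), w.IsCycle ∧ Odd w.length)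
    (hog : ∀ (u : V) (w : G.Walk u u), w.IsCycle → Odd w.length → 2 * d + 1 ≤ w.length) :
    G.diam = d ∧
      sInf {n : ℕ | Odd n ∧ ∃ (u : V) (w : G.Walk u u), w.IsCycle ∧ w.length = n}
        = 2 * d + 1 :=
  stmt_19_general G d hconn heig hoddcycle hog
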